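/- arXiv:1809.01756 — 6 statements merged into one kernel-verified Lean document; each statement's English description precedes it below -/
import Mathlib

section
/- In the 1-challenger, 2-voter TCR voting game, the strategy profile in which both voters vote Reject is always a Nash equilibrium, i.e., for all admissible parameter values (t > 0, D > 0, d ∈ [0,1), s ∈ (0,1), V(0) > 0, V(r) > 0), no voter can strictly increase her payoff by unilaterally deviating from (Reject, Reject). -/
/-- Payoff to a voter in the 1-challenger, 2-voter TCR voting game.
`my` is this voter's vote, `other` the other voter's vote; `true` = Accept,
`false` = Reject.  The candidate is accepted iff both vote Accept. -/
noncomputable def payoff2 (t D d s V0 Vr : ℝ) (my other : Bool) : ℝ :=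
  if my then
    if other then (t + D * (1 - d) / 2) * Vr else t * (1 - s) * V0
  else
    if other then (t + D * (1 - d) + t * s) * V0 else (t + D * (1 - d) / 2) * V0

/-- A profile `(a, b)` is a Nash equilibrium iff neither voter can strictly
increase her payoff by unilaterally changing her vote. -/
def NashEq2 (t D d s V0 Vr : ℝ) (a b : Bool) : Prop :=
  payoff2 t D d s V0 Vr a b ≥ payoff2 t D d s V0 Vr (!a) b ∧
  payoff2 t D d s V0 Vr b a ≥ payoff2 t D d s V0 Vr (!b) a

/-- (Reject, Reject) is always a Nash equilibrium. -/
theorem stmt0 (t D d s V0 Vr : ℝ) (ht : 0 < t) (hD : 0 < D)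
    (hd0 : 0 ≤ d) (hd1 : d < 1) (hs0 : 0 < s) (hs1 : s < 1)
    (hV0 : 0 < V0) (hVr : 0 < Vr) :
    NashEq2 t D d s V0 Vr false false := by
  have key : t * (1 - s) * V0 ≤ (t + D * (1 - d) / 2) * V0 := by nlinarith [mul_pos hD hV0, mul_pos ht hV0, mul_pos hs0 hV0, mul_pos (mul_pos ht hs0) hV0, mul_pos (mul_pos hD hV0) (sub_pos.mpr hd1)]
  constructor <;> simp [payoff2] <;> exact key
end

section
/- In the 1-challenger, 2-voter TCR voting game, the strategy profile (Accept, Accept) is a Nash equilibrium if and only if V(r)/V(0) ≥ 1 + ℰ, where ℰ = (D·(1−d)/2 + t·s) / (t + D·(1−d)/2); equivalently, if and only if (t + D·(1−d)/2)·V(r) ≥ (t + D·(1−d) + t·s)·V(0). -/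
/-- (Accept, Accept) is a Nash equilibrium iff V(r)/V(0) ≥ 1 + ℰ, where
ℰ = (D·(1−d)/2 + t·s)/(t + D·(1−d)/2); equivalently, iff
(t + D·(1−d)/2)·V(r) ≥ (t + D·(1−d) + t·s)·V(0). -/
theorem stmt2 (t D d s V0 Vr : ℝ) (ht : 0 < t) (hD : 0 < D)
    (hd0 : 0 ≤ d) (hd1 : d < 1) (hs0 : 0 < s) (hs1 : s < 1)
    (hV0 : 0 < V0) (hVr : 0 < Vr) :
    (NashEq2 t D d s V0 Vr true true ↔
      Vr / V0 ≥ 1 + (D * (1 - d) / 2 + t * s) / (t + D * (1 - d) / 2)) ∧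
    (NashEq2 t D d s V0 Vr true true ↔
      (t + D * (1 - d) / 2) * Vr ≥ (t + D * (1 - d) + t * s) * V0) := by
  have hA : 0 < t + D * (1 - d) / 2 := by nlinarith
  have key : NashEq2 t D d s V0 Vr true true ↔
      (t + D * (1 - d) / 2) * Vr ≥ (t + D * (1 - d) + t * s) * V0 := by
    unfold NashEq2 payoff2
    simp only [Bool.not_true, if_true, if_false, ite_true, ite_false]
    constructor
    · rintro ⟨h, -⟩; exact h
    · intro h; exact ⟨h, h⟩
  refine ⟨?_, key⟩
  have hratio : 1 + (D * (1 - d) / 2 + t * s) / (t + D * (1 - d) / 2)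
      = (t + D * (1 - d) + t * s) / (t + D * (1 - d) / 2) := by
    rw [one_add_div hA.ne']; congr 1; ring
  rw [key, ge_iff_le, ge_iff_le, hratio, div_le_div_iff₀ hA hV0]
  constructor <;> intro h <;> nlinarith
end

section
/- In the 1-challenger, 2-voter TCR voting game, letting ℰ = (D·(1−d)/2 + t·s) / (t + D·(1−d)/2), the set of pure-strategy Nash equilibria is exactly {(Reject, Reject)} when V(r)/V(0) < 1 + ℰ, and exactly {(Accept, Accept), (Reject, Reject)} when V(r)/V(0) ≥ 1 + ℰ. -/
/-- With ℰ = (D·(1−d)/2 + t·s)/(t + D·(1−d)/2): if V(r)/V(0) < 1 + ℰ, the set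
of pure-strategy Nash equilibria is exactly {(Reject, Reject)}; if
V(r)/V(0) ≥ 1 + ℰ, it is exactly {(Accept, Accept), (Reject, Reject)}. -/
theorem stmt3 (t D d s V0 Vr : ℝ) (ht : 0 < t) (hD : 0 < D)
    (hd0 : 0 ≤ d) (hd1 : d < 1) (hs0 : 0 < s) (hs1 : s < 1)
    (hV0 : 0 < V0) (hVr : 0 < Vr) :
    (Vr / V0 < 1 + (D * (1 - d) / 2 + t * s) / (t + D * (1 - d) / 2) →
      ∀ a b : Bool, NashEq2 t D d s V0 Vr a b ↔ (a = false ∧ b = false)) ∧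
    (Vr / V0 ≥ 1 + (D * (1 - d) / 2 + t * s) / (t + D * (1 - d) / 2) →
      ∀ a b : Bool, NashEq2 t D d s V0 Vr a b ↔
        ((a = true ∧ b = true) ∨ (a = false ∧ b = false))) := by
  have h1d : (0:ℝ) < 1 - d := by linarith
  have hA : 0 < t + D * (1 - d) / 2 := by nlinarith
  have hrw : 1 + (D * (1 - d) / 2 + t * s) / (t + D * (1 - d) / 2)
      = (t + D * (1 - d) + t * s) / (t + D * (1 - d) / 2) := by
    field_simp
    ring
  have key : Vr / V0 < 1 + (D * (1 - d) / 2 + t * s) / (t + D * (1 - d) / 2) ↔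
      (t + D * (1 - d) / 2) * Vr < (t + D * (1 - d) + t * s) * V0 := by
    rw [hrw, div_lt_div_iff₀ hV0 hA]
    constructor <;> intro h <;> nlinarith
  have key2 : Vr / V0 ≥ 1 + (D * (1 - d) / 2 + t * s) / (t + D * (1 - d) / 2) ↔
      (t + D * (1 - d) + t * s) * V0 ≤ (t + D * (1 - d) / 2) * Vr := by
    rw [ge_iff_le, hrw, div_le_div_iff₀ hA hV0]
    constructor <;> intro h <;> nlinarith
  have hts : t * (1 - s) * V0 < (t + D * (1 - d) / 2) * V0 := by
    nlinarith [mul_pos (mul_pos ht hs0) hV0, mul_pos (mul_pos hD h1d) hV0]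
  have hRR : NashEq2 t D d s V0 Vr false false := by
    refine ⟨?_, ?_⟩ <;> simp [payoff2] <;> linarith
  have hmix1 : ¬ NashEq2 t D d s V0 Vr true false := by
    intro hn
    have := hn.1
    simp [payoff2] at this
    linarith
  have hmix2 : ¬ NashEq2 t D d s V0 Vr false true := by
    intro hn
    have := hn.2
    simp [payoff2] at this
    linarith
  have hAA : NashEq2 t D d s V0 Vr true true ↔
      (t + D * (1 - d) + t * s) * V0 ≤ (t + D * (1 - d) / 2) * Vr := by
    constructor
    · intro hn
      have := hn.1
      simpa [payoff2] using this
    · intro hle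
      refine ⟨?_, ?_⟩ <;> simp [payoff2] <;> linarith
  constructor
  · intro h a b
    have hlt := key.mp h
    cases a <;> cases b
    · simp [hRR]
    · simp [hmix2]
    · simp [hmix1]
    · simp only [Bool.true_eq_false, false_and, iff_false]
      intro hn
      exact absurd (hAA.mp hn) (not_le.mpr hlt)
  · intro h a b
    have hle := key2.mp h
    cases a <;> cases b
    · simp [hRR]
    · simp [hmix2]
    · simp [hmix1]
    · simp only [Bool.true_eq_false, false_and, and_self, or_false, iff_true]
      exact hAA.mpr hle
end

section
/- In the 1-challenger, n-voter TCR voting game, any strategy profile σ in which at least one voter votes Accept and at least one voter votes Reject is not a Nash equilibrium: if the candidate is accepted under σ, any voter who voted Reject strictly gains by switching to Accept (which keeps the candidate accepted), and if the candidate is rejected under σ, any voter who voted Accept strictly gains by switching to Reject (which keeps the candidate rejected). -/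
open Finset

/-- Total tokens voting Accept under profile `σ` (`true` = Accept). -/
noncomputable def TA {n : ℕ} (tok : Fin n → ℝ) (σ : Fin n → Bool) : ℝ :=
  ∑ i, if σ i then tok i else 0

/-- Payoff to voter `i` in the 1-challenger, `n`-voter TCR voting game under
profile `σ`.  The candidate is accepted iff `TA tok σ ≥ T * Q`. -/
noncomputable def payoffN {n : ℕ} (tok : Fin n → ℝ)
    (TC T D d s Q V0 Vr : ℝ) (σ : Fin n → Bool) (i : Fin n) : ℝ :=
  if TA tok σ ≥ T * Q then
    if σ i then
      (tok i + (D * (1 - d) + (T - TA tok σ - TC) * s) * tok i / TA tok σ) * Vr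
    else tok i * (1 - s) * Vr
  else
    if σ i then tok i * (1 - s) * V0
    else
      (tok i + (D * (1 - d) + TA tok σ * s) * tok i / (T - TA tok σ - TC)) * V0

/-- `σ` is a Nash equilibrium iff no voter can strictly increase her payoff by
unilaterally changing her vote. -/
def NashEqN {n : ℕ} (tok : Fin n → ℝ) (TC T D d s Q V0 Vr : ℝ)
    (σ : Fin n → Bool) : Prop :=
  ∀ i : Fin n,
    payoffN tok TC T D d s Q V0 Vr σ i ≥
      payoffN tok TC T D d s Q V0 Vr (Function.update σ i (!σ i)) i


lemma TA_nonneg {n : ℕ} (tok : Fin n → ℝ) (htok : ∀ i, 0 < tok i)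
    (σ : Fin n → Bool) : 0 ≤ TA tok σ := by
  apply Finset.sum_nonneg
  intro j _
  split <;> [exact (htok j).le; exact le_rfl]

lemma TA_le {n : ℕ} (tok : Fin n → ℝ) (htok : ∀ i, 0 < tok i)
    (σ : Fin n → Bool) : TA tok σ ≤ ∑ i, tok i := by
  apply Finset.sum_le_sum
  intro j _
  split <;> [exact le_rfl; exact (htok j).le]

lemma TA_update {n : ℕ} (tok : Fin n → ℝ) (σ : Fin n → Bool) (i : Fin n)
    (b : Bool) :
    TA tok (Function.update σ i b) =
      TA tok σ - (if σ i then tok i else 0) + (if b then tok i else 0) := by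
  have h1 : TA tok (Function.update σ i b) =
      (if b then tok i else 0) +
        ∑ j ∈ Finset.univ.erase i, (if σ j then tok j else 0) := by
    unfold TA
    rw [← Finset.add_sum_erase _ _ (Finset.mem_univ i)]
    simp only [Function.update_self]
    congr 1
    apply Finset.sum_congr rfl
    intro j hj
    rw [Function.update_of_ne (Finset.ne_of_mem_erase hj)]
  have h2 : TA tok σ =
      (if σ i then tok i else 0) +
        ∑ j ∈ Finset.univ.erase i, (if σ j then tok j else 0) := by
    unfold TA
    rw [← Finset.add_sum_erase _ _ (Finset.mem_univ i)]
  rw [h1, h2]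
  ring

/-- Any non-unanimous profile is not a Nash equilibrium: if the candidate is
accepted, any Reject voter strictly gains by switching to Accept (which keeps
the candidate accepted); if rejected, any Accept voter strictly gains by
switching to Reject (which keeps the candidate rejected). -/
theorem stmt4 {n : ℕ} (hn : 2 ≤ n) (tok : Fin n → ℝ) (htok : ∀ i, 0 < tok i)
    (TC T D d s Q V0 Vr : ℝ) (hTC : 0 < TC) (hT : T = TC + ∑ i, tok i)
    (hD : 0 < D) (hd0 : 0 ≤ d) (hd1 : d < 1) (hs0 : 0 < s) (hs1 : s < 1)
    (hQ0 : 0 < Q) (hQ1 : Q ≤ 1) (hV0 : 0 < V0) (hVr : 0 < Vr)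
    (σ : Fin n → Bool) (hA : ∃ i, σ i = true) (hR : ∃ j, σ j = false) :
    (TA tok σ ≥ T * Q → ∀ i, σ i = false →
      TA tok (Function.update σ i true) ≥ T * Q ∧
      payoffN tok TC T D d s Q V0 Vr (Function.update σ i true) i >
        payoffN tok TC T D d s Q V0 Vr σ i) ∧
    (¬ TA tok σ ≥ T * Q → ∀ i, σ i = true →
      ¬ TA tok (Function.update σ i false) ≥ T * Q ∧
      payoffN tok TC T D d s Q V0 Vr (Function.update σ i false) i >
        payoffN tok TC T D d s Q V0 Vr σ i) ∧
    ¬ NashEqN tok TC T D d s Q V0 Vr σ := by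

  have hTpos : 0 < T := by
    rw [hT]
    have : 0 ≤ ∑ i, tok i := Finset.sum_nonneg fun i _ => (htok i).le
    linarith
  have hTQ : 0 < T * Q := mul_pos hTpos hQ0
  have key1 : TA tok σ ≥ T * Q → ∀ i, σ i = false →
      TA tok (Function.update σ i true) ≥ T * Q ∧
      payoffN tok TC T D d s Q V0 Vr (Function.update σ i true) i >
        payoffN tok TC T D d s Q V0 Vr σ i := by
    intro hacc i hi
    have hTA' : TA tok (Function.update σ i true) = TA tok σ + tok i := by
      rw [TA_update, hi]; simp
    have hge : TA tok (Function.update σ i true) ≥ T * Q := by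
      rw [hTA']; have := (htok i).le; linarith
    refine ⟨hge, ?_⟩
    have hpos' : 0 < TA tok (Function.update σ i true) := by
      rw [hTA']
      have := TA_nonneg tok htok σ
      have := htok i
      linarith
    have hbound : T - TA tok (Function.update σ i true) - TC ≥ 0 := by
      have h1 : TA tok (Function.update σ i true) ≤ ∑ j, tok j :=
        TA_le tok htok _
      rw [hT]; linarith
    rw [payoffN, payoffN, if_pos hge, if_pos hacc, hi,
      Function.update_self]
    simp only [if_true, Bool.false_eq_true, if_false]
    have hc : 0 < (D * (1 - d) + (T - TA tok (Function.update σ i true) - TC) * s)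
        * tok i / TA tok (Function.update σ i true) := by
      apply div_pos _ hpos'
      apply mul_pos _ (htok i)
      have h1 : 0 < D * (1 - d) := mul_pos hD (by linarith)
      nlinarith
    nlinarith [htok i, mul_pos (htok i) hVr]
  have key2 : ¬ TA tok σ ≥ T * Q → ∀ i, σ i = true →
      ¬ TA tok (Function.update σ i false) ≥ T * Q ∧
      payoffN tok TC T D d s Q V0 Vr (Function.update σ i false) i >
        payoffN tok TC T D d s Q V0 Vr σ i := by
    intro hrej i hi
    push_neg at hrej
    have hTA' : TA tok (Function.update σ i false) = TA tok σ - tok i := by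
      rw [TA_update, hi]; simp
    have hlt : ¬ TA tok (Function.update σ i false) ≥ T * Q := by
      push_neg
      rw [hTA']; have := htok i; linarith
    refine ⟨hlt, ?_⟩
    have hTA'nonneg : 0 ≤ TA tok (Function.update σ i false) :=
      TA_nonneg tok htok _
    have hden : 0 < T - TA tok (Function.update σ i false) - TC := by
      have h1 : TA tok σ ≤ ∑ j, tok j := TA_le tok htok σ
      rw [hTA', hT]
      have := htok i
      linarith
    simp only [payoffN, Function.update_self, hi, if_neg hlt,
      if_neg hrej.not_ge, Bool.false_eq_true, if_false, reduceIte]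
    have hc : 0 < (D * (1 - d) + TA tok (Function.update σ i false) * s)
        * tok i / (T - TA tok (Function.update σ i false) - TC) := by
      apply div_pos _ hden
      apply mul_pos _ (htok i)
      have h1 : 0 < D * (1 - d) := mul_pos hD (by linarith)
      nlinarith
    nlinarith [htok i, mul_pos (htok i) hV0]
  refine ⟨key1, key2, ?_⟩
  intro hne
  by_cases hacc : TA tok σ ≥ T * Q
  · obtain ⟨j, hj⟩ := hR
    have := (key1 hacc j hj).2
    have hupd : Function.update σ j (!σ j) = Function.update σ j true := by
      simp [hj]
    have := hne j
    rw [hupd] at this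
    linarith
  · obtain ⟨j, hj⟩ := hA
    have := (key2 hacc j hj).2
    have hupd : Function.update σ j (!σ j) = Function.update σ j false := by
      simp [hj]
    have := hne j
    rw [hupd] at this
    linarith
end

section
/- In the 1-challenger, n-voter TCR voting game with T − T_C ≥ T·Q and Q > 0, the payoff to voter i at the profile where all voters vote Accept equals (t_i + D·(1−d)·t_i/(T − T_C))·V(r), and the payoff at the profile where all voters vote Reject equals (t_i + D·(1−d)·t_i/(T − T_C))·V(0). Consequently, every voter's payoff at the all-Accept profile strictly exceeds her payoff at the all-Reject profile if and only if V(r) > V(0), and is strictly less if and only if V(r) < V(0); hence if both unanimous profiles are Nash equilibria, all-Accept is the payoff dominant equilibrium when V(r) > V(0) and all-Reject is the payoff dominant equilibrium when V(r) < V(0). -/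
open Finset

/-- With `T − T_C ≥ T·Q` and `Q > 0`: each voter's payoff at the all-Accept
profile equals `(t_i + D·(1−d)·t_i/(T − T_C))·V(r)` and at the all-Reject
profile equals `(t_i + D·(1−d)·t_i/(T − T_C))·V(0)`; every voter strictly
prefers all-Accept iff `V(r) > V(0)` and strictly prefers all-Reject iff
`V(r) < V(0)`; hence if both unanimous profiles are Nash equilibria, all-Accept
is payoff dominant when `V(r) > V(0)` and all-Reject is payoff dominant when
`V(r) < V(0)`. -/
theorem stmt8 {n : ℕ} (hn : 2 ≤ n) (tok : Fin n → ℝ) (htok : ∀ i, 0 < tok i)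
    (TC T D d s Q V0 Vr : ℝ) (hTC : 0 < TC) (hT : T = TC + ∑ i, tok i)
    (hD : 0 < D) (hd0 : 0 ≤ d) (hd1 : d < 1) (hs0 : 0 < s) (hs1 : s < 1)
    (hQ0 : 0 < Q) (hQ1 : Q ≤ 1) (hV0 : 0 < V0) (hVr : 0 < Vr)
    (hacc : T - TC ≥ T * Q) :
    (∀ i, payoffN tok TC T D d s Q V0 Vr (fun _ => true) i =
      (tok i + D * (1 - d) * tok i / (T - TC)) * Vr) ∧
    (∀ i, payoffN tok TC T D d s Q V0 Vr (fun _ => false) i =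
      (tok i + D * (1 - d) * tok i / (T - TC)) * V0) ∧
    ((∀ i, payoffN tok TC T D d s Q V0 Vr (fun _ => true) i >
        payoffN tok TC T D d s Q V0 Vr (fun _ => false) i) ↔ Vr > V0) ∧
    ((∀ i, payoffN tok TC T D d s Q V0 Vr (fun _ => true) i <
        payoffN tok TC T D d s Q V0 Vr (fun _ => false) i) ↔ Vr < V0) ∧
    (NashEqN tok TC T D d s Q V0 Vr (fun _ => true) →
      NashEqN tok TC T D d s Q V0 Vr (fun _ => false) → Vr > V0 →
      ∀ i, payoffN tok TC T D d s Q V0 Vr (fun _ => true) i >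
        payoffN tok TC T D d s Q V0 Vr (fun _ => false) i) ∧
    (NashEqN tok TC T D d s Q V0 Vr (fun _ => true) →
      NashEqN tok TC T D d s Q V0 Vr (fun _ => false) → Vr < V0 →
      ∀ i, payoffN tok TC T D d s Q V0 Vr (fun _ => false) i >
        payoffN tok TC T D d s Q V0 Vr (fun _ => true) i) := by
  have hsum : (0:ℝ) < ∑ i, tok i := Finset.sum_pos (fun i _ => htok i) ⟨⟨0, by omega⟩, Finset.mem_univ _⟩
  have hTsub : T - TC = ∑ i, tok i := by rw [hT]; ring
  have hTpos : (0:ℝ) < T := by rw [hT]; positivity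
  have hTAt : TA tok (fun _ => true) = T - TC := by
    simp [TA, hTsub]
  have hTAf : TA tok (fun _ => false) = 0 := by simp [TA]
  have hTC' : (0:ℝ) < T - TC := by rw [hTsub]; exact hsum
  have hPA : ∀ i, payoffN tok TC T D d s Q V0 Vr (fun _ => true) i =
      (tok i + D * (1 - d) * tok i / (T - TC)) * Vr := by
    intro i
    simp only [payoffN, hTAt, if_pos hacc, if_pos rfl]
    norm_num; try ring_nf
  have hPR : ∀ i, payoffN tok TC T D d s Q V0 Vr (fun _ => false) i =
      (tok i + D * (1 - d) * tok i / (T - TC)) * V0 := by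
    intro i
    have hrej : ¬ (TA tok (fun _ => false) ≥ T * Q) := by
      rw [hTAf]; push_neg; positivity
    simp only [payoffN, if_neg hrej]
    simp only [hTAf]
    norm_num; try ring_nf
  have hC : ∀ i, (0:ℝ) < tok i + D * (1 - d) * tok i / (T - TC) := by
    intro i
    have := htok i
    have h1 : (0:ℝ) < D * (1 - d) * tok i / (T - TC) := by
      apply div_pos
      · have : (0:ℝ) < 1 - d := by linarith
        positivity
      · exact hTC'
    linarith
  have key : ∀ V W : ℝ, (∀ i : Fin n, (tok i + D * (1 - d) * tok i / (T - TC)) * V >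
      (tok i + D * (1 - d) * tok i / (T - TC)) * W) ↔ V > W := by
    intro V W
    constructor
    · intro h
      have i0 : Fin n := ⟨0, by omega⟩
      have := h i0
      exact lt_of_mul_lt_mul_left (by linarith [this]) (le_of_lt (hC i0))
    · intro h i
      exact mul_lt_mul_of_pos_left h (hC i)
  refine ⟨hPA, hPR, ?_, ?_, ?_, ?_⟩
  · simp only [hPA, hPR]; exact key Vr V0
  · simp only [hPA, hPR]
    constructor
    · intro h; exact (key V0 Vr).1 (fun i => h i)
    · intro h i; exact (key V0 Vr).2 h i
  · intro _ _ hv i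
    simp only [hPA, hPR]; exact (key Vr V0).2 hv i
  · intro _ _ hv i
    simp only [hPA, hPR]; exact (key V0 Vr).2 hv i
end

section
/- For a potential challenger holding t tokens with t ≥ D > 0 and token values V(0) > 0, V(r) > 0, the maximum payoff from challenging exceeds the payoff from not challenging, i.e., max((t − D)·V(r), (t + D·d)·V(0)) > t·V(r), if and only if V(r)/V(0) < 1 + D·d/t (where d ≥ 0 is the dispensation percentage). Thus the necessary condition for a challenge to be incentivized is that V(r) not be sufficiently better than V(0). -/
/-- Necessary condition for a challenge: the maximum payoff from challenging
exceeds the payoff from not challenging iff V(r)/V(0) < 1 + D·d/t. -/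
theorem stmt9 (t D d V0 Vr : ℝ) (hD : 0 < D) (htD : D ≤ t) (hd : 0 ≤ d)
    (hV0 : 0 < V0) (hVr : 0 < Vr) :
    max ((t - D) * Vr) ((t + D * d) * V0) > t * Vr ↔
      Vr / V0 < 1 + D * d / t := by
  have ht : 0 < t := hD.trans_le htD
  have h1 : (t - D) * Vr < t * Vr := by nlinarith
  have e : D * d / t * t = D * d := div_mul_cancel₀ _ ht.ne'
  have key : Vr / V0 < 1 + D * d / t ↔ t * Vr < (t + D * d) * V0 := by
    rw [div_lt_iff₀ hV0]
    constructor <;> intro h <;> nlinarith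
  rw [gt_iff_lt, lt_max_iff, key]
  constructor
  · rintro (h | h)
    · exact absurd h (not_lt.mpr h1.le)
    · exact h
  · exact Or.inr
end
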